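/- arXiv:1810.12851 — 4 statements merged into one kernel-verified Lean document; each statement's English description precedes it below -/
import Mathlib

section
/- Let G be a group with a left-order <. Let u, v, t ∈ G with ut = tu and vt = tv, and let m, n₁, n₂ be integers. If t^{m-1} < u < t^m and t^{n₁} < v < t^{n₂}, then t^{m-2} < v^{-1} u v < t^{m+1}. -/
/-! Let `x > t` commute with `t`. If `v⁻¹ x v ≤ 1`, then `x v ≤ v`, hence `x ^ k v ≤ v` for all `k`;
as `x ^ k ≥ t ^ k`, this gives `t ^ (n₁ + k) < x ^ k v ≤ v < t ^ n₂` for every `k`, which is absurd.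
So `v⁻¹ x v > 1`. Taking `x = t ^ (2 - m) u` gives the lower bound, and `x = u⁻¹ t ^ (m + 1)` the
upper one. -/

section LeftOrdered

variable {G : Type*} [Group G] [LinearOrder G] [MulLeftStrictMono G]

attribute [local instance] mulLeftMono_of_mulLeftStrictMono

theorem zpow_right_strictMono_of_mulLeftStrictMono {t : G} (ht : 1 < t) :
    StrictMono fun n : ℤ ↦ t ^ n :=
  strictMono_int_of_lt_succ fun n ↦ by
    rw [zpow_add_one]
    exact lt_mul_of_one_lt_right' (t ^ n) ht

theorem pow_le_pow_left_of_commute {t x : G} (hx : t ≤ x) (hxt : Commute x t) (k : ℕ) :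
    t ^ k ≤ x ^ k := by
  induction k with
  | zero => simp
  | succ k ih =>
    calc t ^ (k + 1) = t * t ^ k := pow_succ' t k
      _ ≤ t * x ^ k := mul_le_mul_right ih t
      _ = x ^ k * t := ((hxt.pow_left k).eq).symm
      _ ≤ x ^ k * x := mul_le_mul_right hx (x ^ k)
      _ = x ^ (k + 1) := (pow_succ x k).symm

theorem one_lt_conj_of_lt_of_commute {t x v : G} (ht : 1 < t) (hx : t < x) (hxt : Commute x t)
    {n₁ n₂ : ℤ} (hv₁ : t ^ n₁ < v) (hv₂ : v < t ^ n₂) :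
    1 < v⁻¹ * x * v := by
  by_contra! h
  have hxv : x * v ≤ v := by simpa [mul_assoc] using mul_le_mul_right h v
  have hxkv (k : ℕ) : x ^ k * v ≤ v := by
    induction k with
    | zero => simp
    | succ k ih =>
      calc x ^ (k + 1) * v = x ^ k * (x * v) := by rw [pow_succ, mul_assoc]
        _ ≤ x ^ k * v := mul_le_mul_right hxv _
        _ ≤ v := ih
  obtain ⟨k, hk⟩ : ∃ k : ℕ, n₂ ≤ n₁ + k := ⟨(n₂ - n₁).toNat, by omega⟩
  have hmono : t ^ n₂ ≤ t ^ (n₁ + k) := (zpow_right_strictMono_of_mulLeftStrictMono ht).monotone hk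
  refine hmono.not_gt ?_
  calc t ^ (n₁ + k) = t ^ n₁ * t ^ k := by rw [zpow_add, zpow_natCast]
    _ ≤ t ^ n₁ * x ^ k := mul_le_mul_right (pow_le_pow_left_of_commute hx.le hxt k) _
    _ = x ^ k * t ^ n₁ := ((hxt.pow_left k).zpow_right n₁).eq.symm
    _ < x ^ k * v := mul_lt_mul_right hv₁ _
    _ ≤ v := hxkv k
    _ < t ^ n₂ := hv₂

theorem zpow_sub_one_lt_conj {t w v : G} (ht : 1 < t) (hwt : Commute w t) (hvt : Commute v t)
    {n₁ n₂ : ℤ} (hv₁ : t ^ n₁ < v) (hv₂ : v < t ^ n₂) {a : ℤ} (hw : t ^ a < w) :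
    t ^ (a - 1) < v⁻¹ * w * v := by
  set x := t ^ (1 - a) * w
  have hx : t < x := by
    calc t = t ^ (1 - a) * t ^ a := by rw [← zpow_add]; simp
      _ < x := mul_lt_mul_right hw _
  have hxt : Commute x t := ((Commute.refl t).zpow_left _).mul_left hwt
  have hconj : v⁻¹ * w * v = t ^ (a - 1) * (v⁻¹ * x * v) := by
    have hw' : w = t ^ (a - 1) * x := by simp [x, ← mul_assoc, ← zpow_add]
    rw [hw', ← mul_assoc v⁻¹, ((hvt.zpow_right _).inv_left).eq]
    simp only [mul_assoc]
  rw [hconj]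
  exact lt_mul_of_one_lt_right' _ (one_lt_conj_of_lt_of_commute ht hx hxt hv₁ hv₂)

theorem conj_lt_zpow_add_one {t w v : G} (ht : 1 < t) (hwt : Commute w t) (hvt : Commute v t)
    {n₁ n₂ : ℤ} (hv₁ : t ^ n₁ < v) (hv₂ : v < t ^ n₂) {b : ℤ} (hw : w < t ^ b) :
    v⁻¹ * w * v < t ^ (b + 1) := by
  set y := w⁻¹ * t ^ (b + 1)
  have hy : t < y := by
    calc t = t * 1 := (mul_one t).symm
      _ < t * (w⁻¹ * t ^ b) := mul_lt_mul_right (lt_inv_mul_iff_mul_lt.mpr (by rwa [mul_one])) t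
      _ = y := by rw [← mul_assoc, ← hwt.inv_left.eq, mul_assoc, ← zpow_one_add, add_comm]
  have hyt : Commute y t := hwt.inv_left.mul_left ((Commute.refl t).zpow_left _)
  have hconj : v⁻¹ * y * v = (v⁻¹ * w * v)⁻¹ * t ^ (b + 1) := by
    simp only [y, mul_inv_rev, inv_inv, mul_assoc, ((hvt.zpow_right (b + 1)).eq)]
  have h := one_lt_conj_of_lt_of_commute ht hy hyt hv₁ hv₂
  rwa [hconj, lt_inv_mul_iff_mul_lt, mul_one] at h

end LeftOrdered

theorem stmt_3 {G : Type*} [Group G] [LinearOrder G]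
    [CovariantClass G G (· * ·) (· < ·)]
    (u v t : G) (hut : u * t = t * u) (hvt : v * t = t * v) (m n₁ n₂ : ℤ)
    (hu1 : t ^ (m - 1) < u) (hu2 : u < t ^ m)
    (hv1 : t ^ n₁ < v) (hv2 : v < t ^ n₂) :
    t ^ (m - 2) < v⁻¹ * u * v ∧ v⁻¹ * u * v < t ^ (m + 1) := by
  have ht : 1 < t := by
    have h : t ^ (m - 1) < t ^ (m - 1) * t := by
      rw [← zpow_add_one, sub_add_cancel]
      exact hu1.trans hu2
    exact lt_of_mul_lt_mul_left' (by rwa [mul_one])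
  constructor
  · convert zpow_sub_one_lt_conj ht hut hvt hv1 hv2 hu1 using 2
    ring
  · exact conj_lt_zpow_add_one ht hut hvt hv1 hv2 hu2
end

section
/- Let G be a group with a left-order <. Let u, v, t ∈ G with ut = tu and vt = tv, and let n₁, n₂ be integers. If v^{-1} u v = u^{-1}, t^{n₁} < v < t^{n₂}, and 1 < t, then t^{-1} < u < t. -/
/-!
Suppose `t ≤ w`, where `w` is `u` or `u⁻¹`. On commuting elements a left order behaves like a
bi-invariant one, so `t ^ k ≤ w ^ k` and `w⁻¹ ^ k ≤ t⁻¹ ^ k` for every `k`. Since conjugation by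
`v` inverts `w`, `w ^ k * v = v * w⁻¹ ^ k`, and squeezing `v` between powers of `t` gives
`t ^ (n₁ + k) < t ^ (n₂ - k)` for all `k ≥ 0`, which fails for large `k` because `1 ≤ t`.
-/

section LeftOrdered

variable {G : Type*}

theorem Commute.pow_le_pow_left [Monoid G] [Preorder G] [MulLeftMono G] {a b : G}
    (h : Commute a b) (hab : a ≤ b) : ∀ n : ℕ, a ^ n ≤ b ^ n
  | 0 => by simp
  | n + 1 =>
    calc a ^ (n + 1) = a ^ n * a := pow_succ a n
      _ ≤ a ^ n * b := mul_le_mul_right hab _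
      _ = b * a ^ n := (h.pow_left n).eq
      _ ≤ b * b ^ n := mul_le_mul_right (h.pow_le_pow_left hab n) _
      _ = b ^ (n + 1) := (pow_succ' b n).symm

variable [Group G]

theorem Commute.inv_le_inv_iff [LE G] [MulLeftMono G] {a b : G} (h : Commute a b) :
    b⁻¹ ≤ a⁻¹ ↔ a ≤ b := by
  rw [inv_le_iff_one_le_mul', (h.symm.inv_right).eq, le_inv_mul_iff_le]

theorem Commute.inv_lt_inv_iff [LT G] [MulLeftStrictMono G] {a b : G} (h : Commute a b) :
    b⁻¹ < a⁻¹ ↔ a < b := by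
  rw [inv_lt_iff_one_lt_mul', (h.symm.inv_right).eq, lt_inv_mul_iff_lt]

theorem Left.zpow_le_zpow_right [Preorder G] [MulLeftMono G] {a : G} (ha : 1 ≤ a) {m n : ℤ}
    (hmn : m ≤ n) : a ^ m ≤ a ^ n :=
  calc a ^ m = a ^ m * 1 := (mul_one _).symm
    _ ≤ a ^ m * a ^ (n - m) := mul_le_mul_right (one_le_zpow ha (by omega)) _
    _ = a ^ n := by rw [← zpow_add, add_sub_cancel]

theorem Commute.lt_of_conj_eq_inv [LinearOrder G] [MulLeftMono G] {w v t : G}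
    (hwt : Commute w t) (hvt : Commute v t) (hconj : v⁻¹ * w * v = w⁻¹) {n₁ n₂ : ℤ}
    (hv₁ : t ^ n₁ < v) (hv₂ : v < t ^ n₂) (ht : 1 ≤ t) : w < t := by
  by_contra! htw
  set k := (n₂ - n₁).toNat
  have hpow : t ^ k ≤ w ^ k := hwt.symm.pow_le_pow_left htw k
  have hpow_inv : (w ^ k)⁻¹ ≤ (t ^ k)⁻¹ := ((hwt.symm.pow_pow k k).inv_le_inv_iff).2 hpow
  have hsemi : SemiconjBy v (w⁻¹ ^ k) (w ^ k) :=
    SemiconjBy.pow_right (by rw [SemiconjBy, ← hconj]; group) k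
  have hsqueeze : t ^ (n₁ + k) < t ^ (n₂ - k) :=
    calc t ^ (n₁ + k) = t ^ n₁ * t ^ k := by rw [zpow_add, zpow_natCast]
      _ ≤ t ^ n₁ * w ^ k := mul_le_mul_right hpow _
      _ = w ^ k * t ^ n₁ := ((hwt.pow_left k).zpow_right n₁).eq.symm
      _ < w ^ k * v := mul_lt_mul_right hv₁ _
      _ = v * (w ^ k)⁻¹ := by rw [← inv_pow]; exact hsemi.eq.symm
      _ ≤ v * (t ^ k)⁻¹ := mul_le_mul_right hpow_inv _
      _ = (t ^ k)⁻¹ * v := (hvt.pow_right k).inv_right.eq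
      _ < (t ^ k)⁻¹ * t ^ n₂ := mul_lt_mul_right hv₂ _
      _ = t ^ (n₂ - k) := by rw [← zpow_natCast, ← zpow_neg, ← zpow_add, neg_add_eq_sub]
  have hk : n₂ - k ≤ n₁ + k := by have := Int.self_le_toNat (n₂ - n₁); omega
  exact hsqueeze.not_ge (Left.zpow_le_zpow_right ht hk)

end LeftOrdered

theorem stmt_4 {G : Type*} [Group G] [LinearOrder G]
    [CovariantClass G G (· * ·) (· < ·)]
    (u v t : G) (hut : u * t = t * u) (hvt : v * t = t * v) (n₁ n₂ : ℤ)
    (hconj : v⁻¹ * u * v = u⁻¹)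
    (hv1 : t ^ n₁ < v) (hv2 : v < t ^ n₂) (ht : 1 < t) :
    t⁻¹ < u ∧ u < t := by
  have := mulLeftMono_of_mulLeftStrictMono G
  have hconj_inv : v⁻¹ * u⁻¹ * v = u⁻¹⁻¹ :=
    calc v⁻¹ * u⁻¹ * v = (v⁻¹ * u * v)⁻¹ := by group
      _ = u⁻¹⁻¹ := by rw [hconj]
  have hu_inv : u⁻¹ < t :=
    Commute.lt_of_conj_eq_inv (Commute.inv_left hut) hvt hconj_inv hv1 hv2 ht.le
  refine ⟨?_, Commute.lt_of_conj_eq_inv hut hvt hconj hv1 hv2 ht.le⟩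
  simpa only [inv_inv] using (Commute.inv_left hut).inv_lt_inv_iff.2 hu_inv
end

section
/- Let α, γ, δ : ℝ² → ℝ² be defined by α(x,y) = (x + 1/6, y), γ(x,y) = (x, γ₀(x) + y), δ(x,y) = (δ₀(x), y), where γ₀ is the 1-periodic piecewise linear function with γ₀(n) = 3 and γ₀(n+1/2) = -3 (n ∈ ℤ, linear in between) and δ₀ is the piecewise linear homeomorphism of ℝ with δ₀(n) = n, δ₀(n+1/3) = n+1/6, δ₀(n+2/3) = n+5/6. Then α⁻³ γ α³ = γ⁻¹ and α⁻³ δ α³ = δ⁻¹ (as homeomorphisms of the plane). -/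
/-- The 1-periodic piecewise linear function with `γ₀ n = 3` and `γ₀ (n + 1/2) = -3`
for every integer `n`, linear in between. -/
noncomputable def gamma0 (x : ℝ) : ℝ :=
  3 - 12 * min (Int.fract x) (1 - Int.fract x)

/-- The piecewise linear bijection of `ℝ` with `δ₀ n = n`, `δ₀ (n + 1/3) = n + 1/6`,
`δ₀ (n + 2/3) = n + 5/6` for every integer `n`, linear in between. -/
noncomputable def delta0 (x : ℝ) : ℝ :=
  (⌊x⌋ : ℝ) +
    (if Int.fract x ≤ 1 / 3 then Int.fract x / 2
     else if Int.fract x ≤ 2 / 3 then 2 * Int.fract x - 1 / 2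
     else Int.fract x / 2 + 1 / 2)


lemma delta0_of_mem (x : ℝ) (h0 : 0 ≤ x) (h1 : x < 1) :
    delta0 x = if x ≤ 1/3 then x/2 else if x ≤ 2/3 then 2*x-1/2 else x/2+1/2 := by
  have hfr : Int.fract x = x := Int.fract_eq_self.2 ⟨h0, h1⟩
  have hfl : ⌊x⌋ = 0 := Int.floor_eq_zero_iff.2 ⟨h0, h1⟩
  simp [delta0, hfr, hfl]

lemma delta0_int_add (n : ℤ) (x : ℝ) : delta0 ((n : ℝ) + x) = n + delta0 x := by
  simp only [delta0, Int.fract_intCast_add, Int.floor_intCast_add]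
  push_cast; ring

lemma fract_add_half (x : ℝ) :
    Int.fract (x + 1/2) =
      if Int.fract x < 1/2 then Int.fract x + 1/2 else Int.fract x - 1/2 := by
  have h0 := Int.fract_nonneg x
  have h1 := Int.fract_lt_one x
  have hx : x + 1/2 = (⌊x⌋ : ℝ) + (Int.fract x + 1/2) := by
    have := Int.floor_add_fract x; linarith
  rw [hx, Int.fract_intCast_add]
  split_ifs with h
  · exact Int.fract_eq_self.2 ⟨by linarith, by linarith⟩
  · have : Int.fract x + 1/2 = (Int.fract x - 1/2) + 1 := by ring
    rw [this, Int.fract_add_one]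
    exact Int.fract_eq_self.2 ⟨by linarith, by linarith⟩

lemma gamma0_add_half (x : ℝ) : gamma0 (x + 1/2) = - gamma0 x := by
  have h0 := Int.fract_nonneg x
  have h1 := Int.fract_lt_one x
  rw [gamma0, gamma0, fract_add_half]
  split_ifs with h
  · rw [min_eq_right (by linarith), min_eq_left (by linarith)]
    ring
  · rw [min_eq_left (by linarith), min_eq_right (by linarith)]
    ring

lemma delta0_key (x : ℝ) : delta0 (delta0 (x + 1/2) - 1/2) = x := by
  have h0 := Int.fract_nonneg x
  have h1 := Int.fract_lt_one x
  set f := Int.fract x with hf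
  have hx : x = (⌊x⌋ : ℝ) + f := by rw [hf, Int.floor_add_fract]
  have key : delta0 (delta0 (f + 1/2) - 1/2) = f := by
    rcases lt_or_ge f (1/2) with h | h
    · rw [delta0_of_mem (f + 1/2) (by linarith) (by linarith)]
      rcases le_or_gt f (1/6) with h6 | h6
      · rw [if_neg (by linarith), if_pos (by linarith)]
        rw [delta0_of_mem _ (by linarith) (by linarith), if_pos (by linarith)]
        ring
      · rw [if_neg (by linarith), if_neg (by linarith)]
        rw [delta0_of_mem _ (by linarith) (by linarith),
          if_neg (by linarith), if_pos (by linarith)]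
        ring
    · have hx2 : f + 1/2 = (1 : ℤ) + (f - 1/2) := by push_cast; ring
      rw [hx2, delta0_int_add, delta0_of_mem (f - 1/2) (by linarith) (by linarith)]
      rcases le_or_gt f (5/6) with h6 | h6
      · rw [if_pos (by linarith)]
        rw [show (1:ℤ) + (f - 1/2)/2 - 1/2 = (f/2 + 1/4 : ℝ) by push_cast; ring]
        rw [delta0_of_mem _ (by linarith) (by linarith),
          if_neg (by linarith), if_pos (by linarith)]
        ring
      · rw [if_neg (by linarith), if_pos (by linarith)]
        rw [show (1:ℤ) + (2*(f - 1/2) - 1/2) - 1/2 = (2*f - 1 : ℝ) by push_cast; ring]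
        rw [delta0_of_mem _ (by linarith) (by linarith),
          if_neg (by linarith), if_neg (by linarith)]
        ring
  calc delta0 (delta0 (x + 1/2) - 1/2)
      = delta0 ((⌊x⌋ : ℝ) + (delta0 (f + 1/2) - 1/2)) := by
        rw [show x + 1/2 = (⌊x⌋ : ℝ) + (f + 1/2) by linarith [hx], delta0_int_add]
        congr 1
        ring
    _ = (⌊x⌋ : ℝ) + delta0 (delta0 (f + 1/2) - 1/2) := delta0_int_add _ _
    _ = x := by
        rw [key, hf]
        exact Int.floor_add_fract x

/-- `α⁻³ γ α³ = γ⁻¹` and `α⁻³ δ α³ = δ⁻¹` as homeomorphisms of the plane. -/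
theorem stmt_12 (A C D : ℝ × ℝ ≃ₜ ℝ × ℝ)
    (hA : ∀ p : ℝ × ℝ, A p = (p.1 + 1 / 6, p.2))
    (hC : ∀ p : ℝ × ℝ, C p = (p.1, gamma0 p.1 + p.2))
    (hD : ∀ p : ℝ × ℝ, D p = (delta0 p.1, p.2)) :
    (∀ p : ℝ × ℝ, (⇑A.symm)^[3] (C ((⇑A)^[3] p)) = C.symm p) ∧
      (∀ p : ℝ × ℝ, (⇑A.symm)^[3] (D ((⇑A)^[3] p)) = D.symm p) := by
  have hA' : ∀ p : ℝ × ℝ, A.symm p = (p.1 - 1/6, p.2) := by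
    intro p
    apply A.injective
    rw [Homeomorph.apply_symm_apply, hA]
    ext <;> simp <;> ring
  have hA3 : ∀ p : ℝ × ℝ, (⇑A)^[3] p = (p.1 + 1/2, p.2) := by
    intro p
    simp only [Function.iterate_succ, Function.iterate_zero, Function.comp_apply, id_eq, hA]
    ext <;> simp <;> ring
  have hA3' : ∀ p : ℝ × ℝ, (⇑A.symm)^[3] p = (p.1 - 1/2, p.2) := by
    intro p
    simp only [Function.iterate_succ, Function.iterate_zero, Function.comp_apply, id_eq, hA']
    ext <;> simp <;> ring
  constructor
  · intro p
    apply C.injective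
    rw [Homeomorph.apply_symm_apply, hA3, hC, hA3', hC]
    have h := gamma0_add_half p.1
    ext
    · show p.1 + 1/2 - 1/2 = p.1
      ring
    · show gamma0 (p.1 + 1/2 - 1/2) + (gamma0 (p.1 + 1/2) + p.2) = p.2
      rw [show p.1 + 1/2 - 1/2 = p.1 by ring]
      linarith
  · intro p
    apply D.injective
    rw [Homeomorph.apply_symm_apply, hA3, hD, hA3', hD]
    ext
    · exact delta0_key p.1
    · rfl
end

section
/- Let G be a group with a left-order <, and suppose a, b, c, d, ε ∈ G are non-identity elements with ab = ba, bc = cb, bd = db, (a³)⁻¹ c a³ = c⁻¹, (a³)⁻¹ d a³ = d⁻¹, and c^d c^{da} c^{da²} c^{da³} c^{da⁴} c^{da⁵} = b⁻³⁶ (where x^y = y⁻¹xy). Then, with |g| = max(g, g⁻¹), it is not the case that |a| < |b|, i.e., |b| ≤ |a|. -/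
section Stmt17Helpers

variable {G : Type*} [Group G] [LinearOrder G] [CovariantClass G G (· * ·) (· < ·)]

private lemma stmt17_sq_one_lt {x : G} (h : 1 < x * x) : 1 < x := by
  rcases lt_trichotomy 1 x with hx | hx | hx
  · exact hx
  · rw [← hx, mul_one] at h; exact absurd h (lt_irrefl 1)
  · exfalso
    have h2 : x * x < x * 1 := mul_lt_mul_right hx x
    rw [mul_one] at h2
    exact absurd h (not_lt.2 (h2.trans hx).le)

private lemma stmt17_one_lt_pow {x : G} (h : 1 < x) : ∀ n : ℕ, 1 < x ^ (n + 1) := by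
  intro n
  induction n with
  | zero => simpa using h
  | succ k ih =>
    have h2 : x ^ (k + 1) * 1 < x ^ (k + 1) * x := mul_lt_mul_right h _
    rw [mul_one] at h2
    calc (1 : G) < x ^ (k + 1) := ih
    _ < x ^ (k + 1) * x := h2
    _ = x ^ (k + 2) := by rw [← pow_succ]

private lemma stmt17_lt_one_pow {x : G} (h : x < 1) : ∀ n : ℕ, x ^ (n + 1) < 1 := by
  intro n
  induction n with
  | zero => simpa using h
  | succ k ih =>
    have h2 : x ^ (k + 1) * x < x ^ (k + 1) * 1 := mul_lt_mul_right h _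
    rw [mul_one] at h2
    calc x ^ (k + 2) = x ^ (k + 1) * x := by rw [pow_succ]
    _ < x ^ (k + 1) := h2
    _ < 1 := ih

private lemma stmt17_core (ε τ β : G)
    (hinv : ε * τ = τ * ε⁻¹)
    (hβτ : β * τ = τ * β) (hβε : β * ε = ε * β)
    (h1 : 1 < β * β * (τ * τ)) (h2 : 1 < β * β * (τ * τ)⁻¹) :
    β⁻¹ < ε := by
  have hinv2 : ε * τ⁻¹ = τ⁻¹ * ε⁻¹ := by
    have h := congrArg (fun x : G => x⁻¹) hinv
    simp only [mul_inv_rev, inv_inv] at h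
    exact h.symm
  have sq1 : (τ * ε) * (τ * ε) = τ * τ := by
    calc (τ * ε) * (τ * ε) = τ * (ε * τ) * ε := by group
    _ = τ * (τ * ε⁻¹) * ε := by rw [hinv]
    _ = τ * τ := by group
  have sq2 : (τ⁻¹ * ε) * (τ⁻¹ * ε) = (τ * τ)⁻¹ := by
    calc (τ⁻¹ * ε) * (τ⁻¹ * ε) = τ⁻¹ * (ε * τ⁻¹) * ε := by group
    _ = τ⁻¹ * (τ⁻¹ * ε⁻¹) * ε := by rw [hinv2]
    _ = (τ * τ)⁻¹ := by group
  have hβτ' : β * τ⁻¹ = τ⁻¹ * β := by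
    calc β * τ⁻¹ = τ⁻¹ * (τ * β) * τ⁻¹ := by group
    _ = τ⁻¹ * (β * τ) * τ⁻¹ := by rw [hβτ]
    _ = τ⁻¹ * β := by group
  have hX : β * (τ * ε) = (τ * ε) * β := by
    calc β * (τ * ε) = (β * τ) * ε := by group
    _ = (τ * β) * ε := by rw [hβτ]
    _ = τ * (β * ε) := by group
    _ = τ * (ε * β) := by rw [hβε]
    _ = (τ * ε) * β := by group
  have hX2 : β * (τ⁻¹ * ε) = (τ⁻¹ * ε) * β := by
    calc β * (τ⁻¹ * ε) = (β * τ⁻¹) * ε := by group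
    _ = (τ⁻¹ * β) * ε := by rw [hβτ']
    _ = τ⁻¹ * (β * ε) := by group
    _ = τ⁻¹ * (ε * β) := by rw [hβε]
    _ = (τ⁻¹ * ε) * β := by group
  have key1 : 1 < β * (τ * ε) := by
    apply stmt17_sq_one_lt
    have e : (β * (τ * ε)) * (β * (τ * ε)) = β * β * ((τ * ε) * (τ * ε)) := by
      calc (β * (τ * ε)) * (β * (τ * ε)) = β * ((τ * ε) * β) * (τ * ε) := by group
      _ = β * (β * (τ * ε)) * (τ * ε) := by rw [← hX]
      _ = β * β * ((τ * ε) * (τ * ε)) := by group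
    rw [e, sq1]; exact h1
  have key2 : 1 < β * (τ⁻¹ * ε) := by
    apply stmt17_sq_one_lt
    have e : (β * (τ⁻¹ * ε)) * (β * (τ⁻¹ * ε)) = β * β * ((τ⁻¹ * ε) * (τ⁻¹ * ε)) := by
      calc (β * (τ⁻¹ * ε)) * (β * (τ⁻¹ * ε)) = β * ((τ⁻¹ * ε) * β) * (τ⁻¹ * ε) := by group
      _ = β * (β * (τ⁻¹ * ε)) * (τ⁻¹ * ε) := by rw [← hX2]
      _ = β * β * ((τ⁻¹ * ε) * (τ⁻¹ * ε)) := by group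
    rw [e, sq2]; exact h2
  have k1 : β⁻¹ < τ * ε := by
    have h' := mul_lt_mul_right key1 β⁻¹
    simpa using h'
  have k2 : β⁻¹ < τ⁻¹ * ε := by
    have h' := mul_lt_mul_right key2 β⁻¹
    simpa using h'
  rcases lt_trichotomy τ 1 with hτ | hτ | hτ
  · -- τ < 1 : use k1
    have stepm : τ⁻¹ * β⁻¹ < ε := by
      have h' := mul_lt_mul_right k1 τ⁻¹
      simpa [← mul_assoc] using h'
    have hτi : 1 < τ⁻¹ := by
      have h' := mul_lt_mul_right hτ τ⁻¹
      simpa using h'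
    have hmm : β⁻¹ * 1 < β⁻¹ * τ⁻¹ := mul_lt_mul_right hτi β⁻¹
    rw [mul_one] at hmm
    have e : τ⁻¹ * β⁻¹ = β⁻¹ * τ⁻¹ := by
      have h' := congrArg (fun x : G => x⁻¹) hβτ
      simpa [mul_inv_rev] using h'
    exact (hmm.trans_eq e.symm).trans stepm
  · -- τ = 1
    have : β⁻¹ < 1 * ε := by rw [hτ] at k1; exact k1
    simpa using this
  · -- 1 < τ : use k2
    have stepm : τ * β⁻¹ < ε := by
      have h' := mul_lt_mul_right k2 τ
      simpa [← mul_assoc] using h'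
    have hmm : β⁻¹ * 1 < β⁻¹ * τ := mul_lt_mul_right hτ β⁻¹
    rw [mul_one] at hmm
    have e : β⁻¹ * τ = τ * β⁻¹ := by
      calc β⁻¹ * τ = β⁻¹ * (τ * β) * β⁻¹ := by group
      _ = β⁻¹ * (β * τ) * β⁻¹ := by rw [← hβτ]
      _ = τ * β⁻¹ := by group
    exact (hmm.trans_eq e).trans stepm

private lemma stmt17_aux (a b c d : G)
    (hab : a * b = b * a) (hbc : b * c = c * b) (hbd : b * d = d * b)
    (hca : (a ^ 3)⁻¹ * c * a ^ 3 = c⁻¹) (hda : (a ^ 3)⁻¹ * d * a ^ 3 = d⁻¹)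
    (hε : (d⁻¹ * c * d) * ((d * a)⁻¹ * c * (d * a)) *
      ((d * a ^ 2)⁻¹ * c * (d * a ^ 2)) * ((d * a ^ 3)⁻¹ * c * (d * a ^ 3)) *
      ((d * a ^ 4)⁻¹ * c * (d * a ^ 4)) * ((d * a ^ 5)⁻¹ * c * (d * a ^ 5)) =
      (b ^ 36)⁻¹)
    (h1 : 1 < b ^ 6 * b ^ 6 * a ^ 6) (h2 : 1 < b ^ 6 * b ^ 6 * (a ^ 6)⁻¹) :
    False := by
  have hCba : Commute b a := hab.symm
  have hCbc : Commute b c := hbc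
  have hCbd : Commute b d := hbd
  have key_c : c * a ^ 3 = a ^ 3 * c⁻¹ := by
    calc c * a ^ 3 = a ^ 3 * ((a ^ 3)⁻¹ * c * a ^ 3) := by group
    _ = a ^ 3 * c⁻¹ := by rw [hca]
  have key_d : d * a ^ 3 = a ^ 3 * d⁻¹ := by
    calc d * a ^ 3 = a ^ 3 * ((a ^ 3)⁻¹ * d * a ^ 3) := by group
    _ = a ^ 3 * d⁻¹ := by rw [hda]
  have key_d' : d⁻¹ * a ^ 3 = a ^ 3 * d := by
    calc d⁻¹ * a ^ 3 = d⁻¹ * (a ^ 3 * d⁻¹) * d := by group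
    _ = d⁻¹ * (d * a ^ 3) * d := by rw [← key_d]
    _ = a ^ 3 * d := by group
  have kd6 : a ^ 6 * d = d * a ^ 6 := by
    calc a ^ 6 * d = a ^ 3 * (a ^ 3 * d) := by group
    _ = a ^ 3 * (d⁻¹ * a ^ 3) := by rw [← key_d']
    _ = (a ^ 3 * d⁻¹) * a ^ 3 := by group
    _ = (d * a ^ 3) * a ^ 3 := by rw [← key_d]
    _ = d * a ^ 6 := by group
  have MAIN : ∀ w : G, Commute b w → a ^ 6 * w = w * a ^ 6 →
      (b ^ 6)⁻¹ < w⁻¹ * c * w := by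
    intro w hbw ha6w
    have hinv : (w⁻¹ * c * w) * (w⁻¹ * a ^ 3 * w) = (w⁻¹ * a ^ 3 * w) * (w⁻¹ * c * w)⁻¹ := by
      calc (w⁻¹ * c * w) * (w⁻¹ * a ^ 3 * w) = w⁻¹ * (c * a ^ 3) * w := by group
      _ = w⁻¹ * (a ^ 3 * c⁻¹) * w := by rw [key_c]
      _ = (w⁻¹ * a ^ 3 * w) * (w⁻¹ * c * w)⁻¹ := by group
    have hsq : (w⁻¹ * a ^ 3 * w) * (w⁻¹ * a ^ 3 * w) = a ^ 6 := by
      calc (w⁻¹ * a ^ 3 * w) * (w⁻¹ * a ^ 3 * w) = w⁻¹ * (a ^ 6 * w) := by group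
      _ = w⁻¹ * (w * a ^ 6) := by rw [ha6w]
      _ = a ^ 6 := by group
    have hCτ : Commute b (w⁻¹ * a ^ 3 * w) :=
      (hbw.inv_right.mul_right (hCba.pow_right 3)).mul_right hbw
    have hCε : Commute b (w⁻¹ * c * w) :=
      (hbw.inv_right.mul_right hCbc).mul_right hbw
    have hβτ : b ^ 6 * (w⁻¹ * a ^ 3 * w) = (w⁻¹ * a ^ 3 * w) * b ^ 6 := (hCτ.pow_left 6).eq
    have hβε : b ^ 6 * (w⁻¹ * c * w) = (w⁻¹ * c * w) * b ^ 6 := (hCε.pow_left 6).eq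
    have hh1 : 1 < b ^ 6 * b ^ 6 * ((w⁻¹ * a ^ 3 * w) * (w⁻¹ * a ^ 3 * w)) := by
      rw [hsq]; exact h1
    have hh2 : 1 < b ^ 6 * b ^ 6 * ((w⁻¹ * a ^ 3 * w) * (w⁻¹ * a ^ 3 * w))⁻¹ := by
      rw [hsq]; exact h2
    exact stmt17_core (w⁻¹ * c * w) (w⁻¹ * a ^ 3 * w) (b ^ 6) hinv hβτ hβε hh1 hh2
  -- commutation of b with the conjugators
  have C1 : Commute b (d * a) := hCbd.mul_right hCba
  have C2 : Commute b (d * a ^ 2) := hCbd.mul_right (hCba.pow_right 2)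
  have C3 : Commute b (d * a ^ 3) := hCbd.mul_right (hCba.pow_right 3)
  have C4 : Commute b (d * a ^ 4) := hCbd.mul_right (hCba.pow_right 4)
  have C5 : Commute b (d * a ^ 5) := hCbd.mul_right (hCba.pow_right 5)
  -- commutation of a^6 with the conjugators
  have W1 : a ^ 6 * (d * a) = (d * a) * a ^ 6 := by
    calc a ^ 6 * (d * a) = (a ^ 6 * d) * a := by group
    _ = (d * a ^ 6) * a := by rw [kd6]
    _ = (d * a) * a ^ 6 := by group
  have W2 : a ^ 6 * (d * a ^ 2) = (d * a ^ 2) * a ^ 6 := by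
    calc a ^ 6 * (d * a ^ 2) = (a ^ 6 * d) * a ^ 2 := by group
    _ = (d * a ^ 6) * a ^ 2 := by rw [kd6]
    _ = (d * a ^ 2) * a ^ 6 := by group
  have W3 : a ^ 6 * (d * a ^ 3) = (d * a ^ 3) * a ^ 6 := by
    calc a ^ 6 * (d * a ^ 3) = (a ^ 6 * d) * a ^ 3 := by group
    _ = (d * a ^ 6) * a ^ 3 := by rw [kd6]
    _ = (d * a ^ 3) * a ^ 6 := by group
  have W4 : a ^ 6 * (d * a ^ 4) = (d * a ^ 4) * a ^ 6 := by
    calc a ^ 6 * (d * a ^ 4) = (a ^ 6 * d) * a ^ 4 := by group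
    _ = (d * a ^ 6) * a ^ 4 := by rw [kd6]
    _ = (d * a ^ 4) * a ^ 6 := by group
  have W5 : a ^ 6 * (d * a ^ 5) = (d * a ^ 5) * a ^ 6 := by
    calc a ^ 6 * (d * a ^ 5) = (a ^ 6 * d) * a ^ 5 := by group
    _ = (d * a ^ 6) * a ^ 5 := by rw [kd6]
    _ = (d * a ^ 5) * a ^ 6 := by group
  have E0 : (b ^ 6)⁻¹ < d⁻¹ * c * d := MAIN d hCbd kd6
  have E1 : (b ^ 6)⁻¹ < (d * a)⁻¹ * c * (d * a) := MAIN (d * a) C1 W1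
  have E2 : (b ^ 6)⁻¹ < (d * a ^ 2)⁻¹ * c * (d * a ^ 2) := MAIN (d * a ^ 2) C2 W2
  have E3 : (b ^ 6)⁻¹ < (d * a ^ 3)⁻¹ * c * (d * a ^ 3) := MAIN (d * a ^ 3) C3 W3
  have E4 : (b ^ 6)⁻¹ < (d * a ^ 4)⁻¹ * c * (d * a ^ 4) := MAIN (d * a ^ 4) C4 W4
  have E5 : (b ^ 6)⁻¹ < (d * a ^ 5)⁻¹ * c * (d * a ^ 5) := MAIN (d * a ^ 5) C5 W5
  -- commutation of b with the conjugates of c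
  have K0 : Commute b (d⁻¹ * c * d) := (hCbd.inv_right.mul_right hCbc).mul_right hCbd
  have K1 : Commute b ((d * a)⁻¹ * c * (d * a)) := (C1.inv_right.mul_right hCbc).mul_right C1
  have K2 : Commute b ((d * a ^ 2)⁻¹ * c * (d * a ^ 2)) :=
    (C2.inv_right.mul_right hCbc).mul_right C2
  have K3 : Commute b ((d * a ^ 3)⁻¹ * c * (d * a ^ 3)) :=
    (C3.inv_right.mul_right hCbc).mul_right C3
  have K4 : Commute b ((d * a ^ 4)⁻¹ * c * (d * a ^ 4)) :=
    (C4.inv_right.mul_right hCbc).mul_right C4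
  have step : ∀ (x y : G) (m n : ℕ), Commute b x → (b ^ m)⁻¹ < y → (b ^ n)⁻¹ < x →
      (b ^ (n + m))⁻¹ < x * y := by
    intro x y m n hcx hy hx
    have h1' : x * (b ^ m)⁻¹ < x * y := mul_lt_mul_right hy x
    have e1 : (b ^ m)⁻¹ * x = x * (b ^ m)⁻¹ := ((hcx.pow_left m).inv_left).eq
    have h3 : (b ^ m)⁻¹ * (b ^ n)⁻¹ < (b ^ m)⁻¹ * x := mul_lt_mul_right hx _
    have e2 : (b ^ (n + m))⁻¹ = (b ^ m)⁻¹ * (b ^ n)⁻¹ := by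
      rw [← mul_inv_rev, ← pow_add]
    calc (b ^ (n + m))⁻¹ = (b ^ m)⁻¹ * (b ^ n)⁻¹ := e2
    _ < (b ^ m)⁻¹ * x := h3
    _ = x * (b ^ m)⁻¹ := e1
    _ < x * y := h1'
  have S4 : (b ^ 12)⁻¹ <
      ((d * a ^ 4)⁻¹ * c * (d * a ^ 4)) * ((d * a ^ 5)⁻¹ * c * (d * a ^ 5)) :=
    step _ _ 6 6 K4 E5 E4
  have S3 : (b ^ 18)⁻¹ < ((d * a ^ 3)⁻¹ * c * (d * a ^ 3)) *
      (((d * a ^ 4)⁻¹ * c * (d * a ^ 4)) * ((d * a ^ 5)⁻¹ * c * (d * a ^ 5))) :=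
    step _ _ 12 6 K3 S4 E3
  have S2 : (b ^ 24)⁻¹ < ((d * a ^ 2)⁻¹ * c * (d * a ^ 2)) *
      (((d * a ^ 3)⁻¹ * c * (d * a ^ 3)) *
      (((d * a ^ 4)⁻¹ * c * (d * a ^ 4)) * ((d * a ^ 5)⁻¹ * c * (d * a ^ 5)))) :=
    step _ _ 18 6 K2 S3 E2
  have S1 : (b ^ 30)⁻¹ < ((d * a)⁻¹ * c * (d * a)) *
      (((d * a ^ 2)⁻¹ * c * (d * a ^ 2)) *
      (((d * a ^ 3)⁻¹ * c * (d * a ^ 3)) *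
      (((d * a ^ 4)⁻¹ * c * (d * a ^ 4)) * ((d * a ^ 5)⁻¹ * c * (d * a ^ 5))))) :=
    step _ _ 24 6 K1 S2 E1
  have S0 : (b ^ 36)⁻¹ < (d⁻¹ * c * d) * (((d * a)⁻¹ * c * (d * a)) *
      (((d * a ^ 2)⁻¹ * c * (d * a ^ 2)) *
      (((d * a ^ 3)⁻¹ * c * (d * a ^ 3)) *
      (((d * a ^ 4)⁻¹ * c * (d * a ^ 4)) * ((d * a ^ 5)⁻¹ * c * (d * a ^ 5)))))) :=
    step _ _ 30 6 K0 S1 E0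
  have hassoc : (d⁻¹ * c * d) * (((d * a)⁻¹ * c * (d * a)) *
      (((d * a ^ 2)⁻¹ * c * (d * a ^ 2)) *
      (((d * a ^ 3)⁻¹ * c * (d * a ^ 3)) *
      (((d * a ^ 4)⁻¹ * c * (d * a ^ 4)) * ((d * a ^ 5)⁻¹ * c * (d * a ^ 5)))))) =
      (b ^ 36)⁻¹ := by
    rw [← hε]; simp only [mul_assoc]
  exact absurd (S0.trans_eq hassoc) (lt_irrefl _)

end Stmt17Helpers

theorem stmt_17 {G : Type*} [Group G] [LinearOrder G]
    [CovariantClass G G (· * ·) (· < ·)]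
    (a b c d : G) (ha : a ≠ 1) (hb : b ≠ 1) (hc : c ≠ 1) (hd : d ≠ 1)
    (hab : a * b = b * a) (hbc : b * c = c * b) (hbd : b * d = d * b)
    (hca : (a ^ 3)⁻¹ * c * a ^ 3 = c⁻¹) (hda : (a ^ 3)⁻¹ * d * a ^ 3 = d⁻¹)
    (hε : (d⁻¹ * c * d) * ((d * a)⁻¹ * c * (d * a)) *
      ((d * a ^ 2)⁻¹ * c * (d * a ^ 2)) * ((d * a ^ 3)⁻¹ * c * (d * a ^ 3)) *
      ((d * a ^ 4)⁻¹ * c * (d * a ^ 4)) * ((d * a ^ 5)⁻¹ * c * (d * a ^ 5)) =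
      (b ^ 36)⁻¹) :
    ¬ (max a a⁻¹ < max b b⁻¹) := by
  intro h
  have hCba : Commute b a := hab.symm
  rcases lt_trichotomy 1 b with hb1 | hb1 | hb1
  · -- 1 < b
    have hbinv : b⁻¹ < 1 := by
      have h' := mul_lt_mul_right hb1 b⁻¹
      simpa using h'
    have hmaxb : max b b⁻¹ = b := max_eq_left (hbinv.trans hb1).le
    rw [hmaxb] at h
    have ha1 : a < b := (le_max_left a a⁻¹).trans_lt h
    have ha2 : a⁻¹ < b := (le_max_right a a⁻¹).trans_lt h
    have p1 : 1 < b * a := by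
      have h' := mul_lt_mul_right ha2 a
      rw [mul_inv_cancel, hab] at h'
      exact h'
    have p2 : 1 < b * a⁻¹ := by
      have h' := mul_lt_mul_right ha1 a⁻¹
      rw [inv_mul_cancel, hCba.inv_right.eq.symm] at h'
      exact h'
    have r1 : 1 < b ^ 6 * a ^ 6 := by
      have h' := stmt17_one_lt_pow p1 5
      rwa [hCba.mul_pow] at h'
    have r2 : 1 < b ^ 6 * (a ^ 6)⁻¹ := by
      have h' := stmt17_one_lt_pow p2 5
      rwa [hCba.inv_right.mul_pow, inv_pow] at h'
    have r3 : 1 < b ^ 6 := stmt17_one_lt_pow hb1 5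
    have g1 : 1 < b ^ 6 * b ^ 6 * a ^ 6 := by
      have h' : b ^ 6 * 1 < b ^ 6 * (b ^ 6 * a ^ 6) := mul_lt_mul_right r1 _
      rw [mul_one] at h'
      calc (1 : G) < b ^ 6 := r3
      _ < b ^ 6 * (b ^ 6 * a ^ 6) := h'
      _ = b ^ 6 * b ^ 6 * a ^ 6 := by rw [mul_assoc]
    have g2 : 1 < b ^ 6 * b ^ 6 * (a ^ 6)⁻¹ := by
      have h' : b ^ 6 * 1 < b ^ 6 * (b ^ 6 * (a ^ 6)⁻¹) := mul_lt_mul_right r2 _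
      rw [mul_one] at h'
      calc (1 : G) < b ^ 6 := r3
      _ < b ^ 6 * (b ^ 6 * (a ^ 6)⁻¹) := h'
      _ = b ^ 6 * b ^ 6 * (a ^ 6)⁻¹ := by rw [mul_assoc]
    exact stmt17_aux a b c d hab hbc hbd hca hda hε g1 g2
  · exact hb hb1.symm
  · -- b < 1 : pass to the dual order
    have hbinv : 1 < b⁻¹ := by
      have h' := mul_lt_mul_right hb1 b⁻¹
      simpa using h'
    have hmaxb : max b b⁻¹ = b⁻¹ := max_eq_right (hb1.trans hbinv).le
    rw [hmaxb] at h
    have ha1 : a < b⁻¹ := (le_max_left a a⁻¹).trans_lt h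
    have ha2 : a⁻¹ < b⁻¹ := (le_max_right a a⁻¹).trans_lt h
    have p1 : b * a < 1 := by
      have h' := mul_lt_mul_right ha1 b
      rwa [mul_inv_cancel] at h'
    have p2 : b * a⁻¹ < 1 := by
      have h' := mul_lt_mul_right ha2 b
      rwa [mul_inv_cancel] at h'
    have r1 : b ^ 6 * a ^ 6 < 1 := by
      have h' := stmt17_lt_one_pow p1 5
      rwa [hCba.mul_pow] at h'
    have r2 : b ^ 6 * (a ^ 6)⁻¹ < 1 := by
      have h' := stmt17_lt_one_pow p2 5
      rwa [hCba.inv_right.mul_pow, inv_pow] at h'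
    have r3 : b ^ 6 < 1 := stmt17_lt_one_pow hb1 5
    have g1 : b ^ 6 * b ^ 6 * a ^ 6 < 1 := by
      have h' : b ^ 6 * (b ^ 6 * a ^ 6) < b ^ 6 * 1 := mul_lt_mul_right r1 _
      rw [mul_one] at h'
      calc b ^ 6 * b ^ 6 * a ^ 6 = b ^ 6 * (b ^ 6 * a ^ 6) := by rw [mul_assoc]
      _ < b ^ 6 := h'
      _ < 1 := r3
    have g2 : b ^ 6 * b ^ 6 * (a ^ 6)⁻¹ < 1 := by
      have h' : b ^ 6 * (b ^ 6 * (a ^ 6)⁻¹) < b ^ 6 * 1 := mul_lt_mul_right r2 _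
      rw [mul_one] at h'
      calc b ^ 6 * b ^ 6 * (a ^ 6)⁻¹ = b ^ 6 * (b ^ 6 * (a ^ 6)⁻¹) := by rw [mul_assoc]
      _ < b ^ 6 := h'
      _ < 1 := r3
    exact stmt17_aux (G := Gᵒᵈ) a b c d hab hbc hbd hca hda hε g1 g2
end
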